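/- Let P₁, P₂ ⊆ ℝⁿ be full-dimensional anti-blocking polytopes. Then the polar (in ℝⁿ × ℝ) of the Cayley polytope conv((2·P₁ × {1}) ∪ ((−2·P₂) × {−1})) equals conv(((−A(P₂)) × {1}) ∪ (A(P₁) × {−1})). -/
import Mathlib


open Set Pointwise

/-- `Q ⊆ ℝⁿ` is anti-blocking: contained in the nonnegative orthant and down-closed
within it. -/
def IsAntiBlocking {n : ℕ} (Q : Set (Fin n → ℝ)) : Prop :=
  (∀ x ∈ Q, ∀ i, 0 ≤ x i) ∧
  ∀ q ∈ Q, ∀ p : Fin n → ℝ, (∀ i, 0 ≤ p i ∧ p i ≤ q i) → p ∈ Q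

/-- `Q` is a polytope: the convex hull of a finite set. -/
def IsPolytope {n : ℕ} (Q : Set (Fin n → ℝ)) : Prop :=
  ∃ V : Finset (Fin n → ℝ), Q = convexHull ℝ (V : Set (Fin n → ℝ))

/-- The anti-blocking polytope `A(Q)` associated to `Q ⊆ ℝⁿ_{≥0}`. -/
def antiBlocker {n : ℕ} (Q : Set (Fin n → ℝ)) : Set (Fin n → ℝ) :=
  {d | (∀ i, 0 ≤ d i) ∧ ∀ x ∈ Q, ∑ i, d i * x i ≤ 1}

/-- The Cayley polytope `conv((Q₁ × {1}) ∪ (Q₂ × {−1})) ⊆ ℝⁿ × ℝ`. -/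
def cayley {n : ℕ} (Q₁ Q₂ : Set (Fin n → ℝ)) : Set ((Fin n → ℝ) × ℝ) :=
  convexHull ℝ
    (((fun x => (x, (1 : ℝ))) '' Q₁) ∪ ((fun x => (x, (-1 : ℝ))) '' Q₂))

/-- The polar of a subset of `ℝⁿ × ℝ` with respect to the standard inner product. -/
def polarNR {n : ℕ} (S : Set ((Fin n → ℝ) × ℝ)) : Set ((Fin n → ℝ) × ℝ) :=
  {y | ∀ x ∈ S, (∑ i, y.1 i * x.1 i) + y.2 * x.2 ≤ 1}

section Aux

variable {n : ℕ}

private lemma ipLinear (y : (Fin n → ℝ) × ℝ) :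
    IsLinearMap ℝ (fun x : (Fin n → ℝ) × ℝ => (∑ i, y.1 i * x.1 i) + y.2 * x.2) := by
  constructor
  · intro x z
    simp [mul_add, Finset.sum_add_distrib]
    ring
  · intro c x
    simp only [smul_eq_mul, Prod.smul_fst, Prod.smul_snd, Pi.smul_apply, mul_left_comm,
      ← Finset.mul_sum]
    ring

private lemma polarNR_convexHull (S : Set ((Fin n → ℝ) × ℝ)) :
    polarNR (convexHull ℝ S) = polarNR S := by
  apply Set.Subset.antisymm
  · intro y hy x hx; exact hy x (subset_convexHull ℝ S hx)
  · intro y hy x hx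
    exact convexHull_min hy (convex_halfSpace_le (ipLinear y) 1) hx

private lemma polarNR_convex (S : Set ((Fin n → ℝ) × ℝ)) : Convex ℝ (polarNR S) := by
  intro y hy z hz a b ha hb hab x hx
  have h1 := hy x hx
  have h2 := hz x hx
  have e : (∑ i, (a • y + b • z).1 i * x.1 i) + (a • y + b • z).2 * x.2
      = a * ((∑ i, y.1 i * x.1 i) + y.2 * x.2) + b * ((∑ i, z.1 i * x.1 i) + z.2 * x.2) := by
    simp [add_mul, Finset.sum_add_distrib, mul_assoc, ← Finset.mul_sum, smul_eq_mul]
    ring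
  show _ ≤ (1 : ℝ)
  rw [e]
  nlinarith

private lemma mem_polar_cayley_iff (Q₁ Q₂ : Set (Fin n → ℝ)) (y : (Fin n → ℝ) × ℝ) :
    y ∈ polarNR (cayley Q₁ Q₂) ↔
      (∀ x ∈ Q₁, (∑ i, y.1 i * x i) + y.2 ≤ 1) ∧
      (∀ x ∈ Q₂, (∑ i, y.1 i * x i) - y.2 ≤ 1) := by
  rw [cayley, polarNR_convexHull]
  constructor
  · intro h
    refine ⟨fun x hx => ?_, fun x hx => ?_⟩
    · simpa using h (x, 1) (Or.inl ⟨x, hx, rfl⟩)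
    · simpa [sub_eq_add_neg] using h (x, -1) (Or.inr ⟨x, hx, rfl⟩)
  · rintro ⟨h1, h2⟩ x (⟨p, hp, rfl⟩ | ⟨p, hp, rfl⟩)
    · simpa using h1 p hp
    · simpa [sub_eq_add_neg] using h2 p hp

private lemma sum_mul_smul (d x : Fin n → ℝ) (c : ℝ) :
    (∑ i, d i * (c • x) i) = c * ∑ i, d i * x i := by
  simp only [Pi.smul_apply, smul_eq_mul, mul_left_comm, ← Finset.mul_sum]

private lemma mem_polar_scaled_iff (P₁ P₂ : Set (Fin n → ℝ)) (y : (Fin n → ℝ) × ℝ) :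
    y ∈ polarNR (cayley ((2 : ℝ) • P₁) ((-2 : ℝ) • P₂)) ↔
      (∀ x ∈ P₁, 2 * (∑ i, y.1 i * x i) + y.2 ≤ 1) ∧
      (∀ x ∈ P₂, -2 * (∑ i, y.1 i * x i) - y.2 ≤ 1) := by
  rw [mem_polar_cayley_iff]
  constructor
  · rintro ⟨h1, h2⟩
    refine ⟨fun x hx => ?_, fun x hx => ?_⟩
    · have := h1 ((2 : ℝ) • x) (smul_mem_smul_set hx)
      rwa [sum_mul_smul] at this
    · have := h2 ((-2 : ℝ) • x) (smul_mem_smul_set hx)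
      rwa [sum_mul_smul] at this
  · rintro ⟨h1, h2⟩
    refine ⟨?_, ?_⟩
    · rintro x ⟨p, hp, rfl⟩
      rw [sum_mul_smul]; exact h1 p hp
    · rintro x ⟨p, hp, rfl⟩
      rw [sum_mul_smul]; exact h2 p hp

private lemma interior_pos {Q : Set (Fin n → ℝ)} (hQ : ∀ x ∈ Q, ∀ i, 0 ≤ x i)
    {w : Fin n → ℝ} (hw : w ∈ interior Q) (i : Fin n) : 0 < w i := by
  obtain ⟨ε, hε, hball⟩ := Metric.isOpen_iff.mp isOpen_interior w hw
  set v : Fin n → ℝ := Function.update w i (w i - ε / 2) with hv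
  have hvQ : v ∈ Q := by
    apply interior_subset
    apply hball
    rw [Metric.mem_ball, dist_pi_lt_iff hε]
    intro j
    by_cases hj : j = i
    · subst hj
      simp only [hv, Function.update_self, Real.dist_eq]
      rw [show w j - ε / 2 - w j = -(ε / 2) by ring, abs_neg, abs_of_pos (by linarith)]
      linarith
    · simp [hv, Function.update_of_ne hj, hε]
  have := hQ v hvQ i
  rw [hv, Function.update_self] at this
  linarith

private lemma zero_mem {Q : Set (Fin n → ℝ)} (hab : IsAntiBlocking Q)
    (hne : Q.Nonempty) : (0 : Fin n → ℝ) ∈ Q := by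
  obtain ⟨w, hw⟩ := hne
  exact hab.2 w hw 0 (fun i => ⟨le_refl _, hab.1 w hw i⟩)

end Aux

/-- For full-dimensional anti-blocking polytopes,
`(conv((2P₁ × {1}) ∪ ((−2P₂) × {−1})))° = conv(((−A(P₂)) × {1}) ∪ (A(P₁) × {−1}))`. -/
theorem polar_cayley_antiBlocking
    {n : ℕ} (P₁ P₂ : Set (Fin n → ℝ))
    (h₁poly : IsPolytope P₁) (h₁ab : IsAntiBlocking P₁)
    (h₁full : (interior P₁).Nonempty)
    (h₂poly : IsPolytope P₂) (h₂ab : IsAntiBlocking P₂)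
    (h₂full : (interior P₂).Nonempty) :
    polarNR (cayley ((2 : ℝ) • P₁) ((-2 : ℝ) • P₂)) =
      cayley (-(antiBlocker P₂)) (antiBlocker P₁) := by
  obtain ⟨w₁, hw₁⟩ := h₁full
  obtain ⟨w₂, hw₂⟩ := h₂full
  have hw₁P : w₁ ∈ P₁ := interior_subset hw₁
  have hw₂P : w₂ ∈ P₂ := interior_subset hw₂
  have hw₁pos : ∀ i, 0 < w₁ i := interior_pos h₁ab.1 hw₁
  have hw₂pos : ∀ i, 0 < w₂ i := interior_pos h₂ab.1 hw₂
  have zero1 : (0 : Fin n → ℝ) ∈ P₁ := zero_mem h₁ab ⟨w₁, hw₁P⟩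
  have zero2 : (0 : Fin n → ℝ) ∈ P₂ := zero_mem h₂ab ⟨w₂, hw₂P⟩
  apply Set.Subset.antisymm
  · -- hard direction
    rintro ⟨d, t⟩ h
    rw [mem_polar_scaled_iff] at h
    obtain ⟨h1, h2⟩ := h
    dsimp only at h1 h2
    have ht1 : t ≤ 1 := by have := h1 0 zero1; simpa using this
    have ht2 : -1 ≤ t := by
      have := h2 0 zero2
      simp at this
      linarith
    unfold cayley
    rcases eq_or_lt_of_le ht1 with rfl | htlt1
    · -- t = 1 : here d ≤ 0 and (d,1) is a vertex of type (-b, 1)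
      have hd : ∀ i, d i ≤ 0 := by
        intro i
        set p : Fin n → ℝ := fun j => if j = i then w₁ i else 0 with hp
        have hpP : p ∈ P₁ := by
          apply h₁ab.2 w₁ hw₁P
          intro j
          by_cases hj : j = i
          · subst hj; simp [hp, (hw₁pos _).le]
          · simp only [hp, if_neg hj]
            exact ⟨le_refl _, h₁ab.1 w₁ hw₁P j⟩
        have hh := h1 p hpP
        have hsum : (∑ j, d j * p j) = d i * w₁ i := by simp [hp, mul_ite]
        rw [hsum] at hh
        nlinarith [hw₁pos i]
      apply subset_convexHull
      left
      refine ⟨d, ?_, rfl⟩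
      rw [Set.mem_neg]
      refine ⟨fun i => by simpa using hd i, fun x hx => ?_⟩
      have hh := h2 x hx
      simp only [Pi.neg_apply, neg_mul, Finset.sum_neg_distrib]
      linarith
    rcases eq_or_lt_of_le ht2 with heq | htlt2
    · -- t = -1 : here d ≥ 0 and (d,-1) is a vertex of type (a, -1)
      subst heq
      have hd : ∀ i, 0 ≤ d i := by
        intro i
        set p : Fin n → ℝ := fun j => if j = i then w₂ i else 0 with hp
        have hpP : p ∈ P₂ := by
          apply h₂ab.2 w₂ hw₂P
          intro j
          by_cases hj : j = i
          · subst hj; simp [hp, (hw₂pos _).le]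
          · simp only [hp, if_neg hj]
            exact ⟨le_refl _, h₂ab.1 w₂ hw₂P j⟩
        have hh := h2 p hpP
        have hsum : (∑ j, d j * p j) = d i * w₂ i := by simp [hp, mul_ite]
        rw [hsum] at hh
        nlinarith [hw₂pos i]
      apply subset_convexHull
      right
      refine ⟨d, ⟨hd, fun x hx => ?_⟩, rfl⟩
      have hh := h1 x hx
      linarith
    · -- -1 < t < 1 : convex combination
      set l : ℝ := (1 - t) / 2 with hl'
      set m : ℝ := (1 + t) / 2 with hm'
      have hl : 0 < l := by rw [hl']; linarith
      have hm : 0 < m := by rw [hm']; linarith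
      set a : Fin n → ℝ := fun i => max (d i) 0 / l with ha'
      set b : Fin n → ℝ := fun i => max (-d i) 0 / m with hb'
      have ha : a ∈ antiBlocker P₁ := by
        refine ⟨fun i => div_nonneg (le_max_right _ _) hl.le, fun x hx => ?_⟩
        set x' : Fin n → ℝ := fun i => if 0 ≤ d i then x i else 0 with hx'
        have hx'P : x' ∈ P₁ := by
          apply h₁ab.2 x hx
          intro i
          by_cases hdi : 0 ≤ d i
          · simp only [hx', if_pos hdi]
            exact ⟨h₁ab.1 x hx i, le_refl _⟩
          · simp only [hx', if_neg hdi]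
            exact ⟨le_refl _, h₁ab.1 x hx i⟩
        have key : (∑ i, d i * x' i) = ∑ i, max (d i) 0 * x i := by
          apply Finset.sum_congr rfl
          intro i _
          by_cases hdi : 0 ≤ d i
          · simp [hx', if_pos hdi, max_eq_left hdi]
          · simp [hx', if_neg hdi, max_eq_right (le_of_not_ge hdi)]
        have hh := h1 x' hx'P
        rw [key] at hh
        have goal1 : ∑ i, a i * x i = (∑ i, max (d i) 0 * x i) / l := by
          rw [Finset.sum_div]
          apply Finset.sum_congr rfl
          intro i _
          rw [ha', div_mul_eq_mul_div]
        rw [goal1, div_le_one hl, hl']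
        linarith
      have hb : b ∈ antiBlocker P₂ := by
        refine ⟨fun i => div_nonneg (le_max_right _ _) hm.le, fun x hx => ?_⟩
        set x' : Fin n → ℝ := fun i => if 0 ≤ d i then 0 else x i with hx'
        have hx'P : x' ∈ P₂ := by
          apply h₂ab.2 x hx
          intro i
          by_cases hdi : 0 ≤ d i
          · simp only [hx', if_pos hdi]
            exact ⟨le_refl _, h₂ab.1 x hx i⟩
          · simp only [hx', if_neg hdi]
            exact ⟨h₂ab.1 x hx i, le_refl _⟩
        have key : (∑ i, d i * x' i) = ∑ i, -(max (-d i) 0 * x i) := by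
          apply Finset.sum_congr rfl
          intro i _
          by_cases hdi : 0 ≤ d i
          · simp [hx', if_pos hdi, max_eq_right (neg_nonpos.mpr hdi)]
          · have hdi' : d i ≤ 0 := le_of_not_ge hdi
            simp only [hx', if_neg hdi, max_eq_left (neg_nonneg.mpr hdi')]
            ring
        have hh := h2 x' hx'P
        rw [key, Finset.sum_neg_distrib] at hh
        have goal1 : ∑ i, b i * x i = (∑ i, max (-d i) 0 * x i) / m := by
          rw [Finset.sum_div]
          exact Finset.sum_congr rfl (fun i _ => by rw [hb', div_mul_eq_mul_div])
        rw [goal1, div_le_one hm, hm']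
        linarith
      have hgenB : ((-b, (1 : ℝ)) : (Fin n → ℝ) × ℝ) ∈
          ((fun x => (x, (1 : ℝ))) '' (-(antiBlocker P₂)) ∪
            (fun x => (x, (-1 : ℝ))) '' (antiBlocker P₁)) :=
        Or.inl ⟨-b, by rwa [Set.mem_neg, neg_neg], rfl⟩
      have hgenA : ((a, (-1 : ℝ)) : (Fin n → ℝ) × ℝ) ∈
          ((fun x => (x, (1 : ℝ))) '' (-(antiBlocker P₂)) ∪
            (fun x => (x, (-1 : ℝ))) '' (antiBlocker P₁)) :=
        Or.inr ⟨a, ha, rfl⟩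
      have hcomb := (convex_convexHull ℝ _) (subset_convexHull ℝ _ hgenB)
        (subset_convexHull ℝ _ hgenA) hm.le hl.le (show m + l = 1 by rw [hm', hl']; ring)
      have heq : ((d, t) : (Fin n → ℝ) × ℝ) = m • (-b, (1 : ℝ)) + l • (a, (-1 : ℝ)) := by
        rw [Prod.ext_iff]
        constructor
        · show d = m • (-b) + l • a
          funext i
          simp only [Pi.add_apply, Pi.smul_apply, Pi.neg_apply, smul_eq_mul, ha', hb']
          rw [mul_neg, ← mul_div_assoc, ← mul_div_assoc, mul_div_cancel_left₀ _ hm.ne',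
            mul_div_cancel_left₀ _ hl.ne']
          rcases le_total 0 (d i) with hdi | hdi
          · rw [max_eq_left hdi, max_eq_right (neg_nonpos.mpr hdi)]; ring
          · rw [max_eq_right hdi, max_eq_left (neg_nonneg.mpr hdi)]; ring
        · show t = m * 1 + l * (-1)
          rw [hm', hl']; ring
      rw [heq]
      exact hcomb
  · -- easy direction
    have hsub : ((fun x => (x, (1 : ℝ))) '' (-(antiBlocker P₂)) ∪
          (fun x => (x, (-1 : ℝ))) '' (antiBlocker P₁)) ⊆
        polarNR (cayley ((2 : ℝ) • P₁) ((-2 : ℝ) • P₂)) := by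
      rintro y (⟨c, hc, rfl⟩ | ⟨a, ha, rfl⟩)
      · rw [mem_polar_scaled_iff]
        rw [Set.mem_neg] at hc
        dsimp only
        refine ⟨fun x hx => ?_, fun x hx => ?_⟩
        · have hpos : 0 ≤ ∑ i, (-c) i * x i :=
            Finset.sum_nonneg (fun i _ => mul_nonneg (hc.1 i) (h₁ab.1 x hx i))
          simp only [Pi.neg_apply, neg_mul, Finset.sum_neg_distrib] at hpos
          linarith
        · have hle := hc.2 x hx
          simp only [Pi.neg_apply, neg_mul, Finset.sum_neg_distrib] at hle
          linarith
      · rw [mem_polar_scaled_iff]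
        dsimp only
        refine ⟨fun x hx => ?_, fun x hx => ?_⟩
        · have := ha.2 x hx
          linarith
        · have hpos : 0 ≤ ∑ i, a i * x i :=
            Finset.sum_nonneg (fun i _ => mul_nonneg (ha.1 i) (h₂ab.1 x hx i))
          linarith
    exact convexHull_min hsub (polarNR_convex _)
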